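/- arXiv:0812.0150 — 5 statements merged into one kernel-verified Lean document; each statement's English description precedes it below -/
import Mathlib

section
/- In any symmetric Picard category 𝒜, for all objects a and b the square κ_{a,b} ≫ (s_{a,b})^• = s_{a^•,b^•} ≫ κ_{b,a} commutes, where s denotes the braiding (symmetry) of 𝒜, s_{a,b} : a ⊗ b ⟶ b ⊗ a, and (s_{a,b})^• : (b ⊗ a)^• ⟶ (a ⊗ b)^• is its dual morphism. -/
/-!
Since `j` makes every object invertible, `- ▷ c` is an autoequivalence, so `κ` and `(-)^•`
exist as specified, and two morphisms into `(a ⊗ b)^•` agree once they agree after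
`- ▷ (a ⊗ b) ≫ j⁻¹`. This turns the square into the identity
`(a^• ⊗ b^•) ◁ s_{a,b} ≫ pairing a b = s_{a^•,b^•} ▷ (a ⊗ b) ≫ pairing b a`.
By hexagon and naturality, the nested contraction `pairing a b` equals a braiding followed by
`tensorμ` and the side-by-side contraction `j_a⁻¹ ⊗ j_b⁻¹`; the identity then follows from
`s² = 1` and the compatibility of `tensorμ` with the braiding.
-/

open CategoryTheory Category MonoidalCategory

universe v u

/-- A symmetric Picard category: a symmetric monoidal groupoid equipped with, for every
object `a`, a chosen object `dual a` and a chosen isomorphism `j a : 𝟙_ C ≅ dual a ⊗ a`. -/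
class SymmetricPicard (C : Type u) [Groupoid.{v} C] [MonoidalCategory C]
    [SymmetricCategory C] where
  dual : C → C
  j : ∀ a : C, 𝟙_ C ≅ dual a ⊗ a

namespace SymmetricPicard

variable {C : Type u} [Groupoid.{v} C] [MonoidalCategory C] [SymmetricCategory C]
  [SymmetricPicard C]

/-- The dual of a morphism `f : a ⟶ b`: the unique morphism `g : dual b ⟶ dual a`
such that `(j b).hom ≫ (g ⊗ inv f) = (j a).hom`. -/
noncomputable def dualHom {a b : C} (f : a ⟶ b) : dual b ⟶ dual a :=
  @Classical.epsilon _
    ⟨(ρ_ (dual b)).inv ≫ (dual b ◁ (j a).hom) ≫ (dual b ◁ (dual a ◁ f)) ≫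
      (α_ (dual b) (dual a) b).inv ≫ ((β_ (dual b) (dual a)).hom ▷ b) ≫
      (α_ (dual a) (dual b) b).hom ≫ (dual a ◁ (j b).inv) ≫ (ρ_ (dual a)).hom⟩
    (fun g => (j b).hom ≫ (g ⊗ₘ inv f) = (j a).hom)

/-- The canonical pairing `(a^• ⊗ b^•) ⊗ (b ⊗ a) ⟶ 𝟙`. -/
noncomputable def pairing (a b : C) : (dual a ⊗ dual b) ⊗ (b ⊗ a) ⟶ 𝟙_ C :=
  (α_ (dual a) (dual b) (b ⊗ a)).hom ≫ (𝟙 (dual a) ⊗ₘ (α_ (dual b) b a).inv) ≫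
    (𝟙 (dual a) ⊗ₘ ((j b).inv ⊗ₘ 𝟙 a)) ≫ (𝟙 (dual a) ⊗ₘ (λ_ a).hom) ≫ (j a).inv

/-- Laplaza's canonical arrow `κ_{a,b} : a^• ⊗ b^• ⟶ (b ⊗ a)^•`: the unique morphism `f`
such that `(f ⊗ 𝟙_{b⊗a}) ≫ j_{b⊗a}⁻¹` is the canonical pairing. -/
noncomputable def kappa (a b : C) : dual a ⊗ dual b ⟶ dual (b ⊗ a) :=
  @Classical.epsilon _
    ⟨(ρ_ (dual a ⊗ dual b)).inv ≫ ((dual a ⊗ dual b) ◁ (j (b ⊗ a)).hom) ≫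
      ((dual a ⊗ dual b) ◁ (β_ (dual (b ⊗ a)) (b ⊗ a)).hom) ≫
      (α_ (dual a ⊗ dual b) (b ⊗ a) (dual (b ⊗ a))).inv ≫
      (pairing a b ▷ dual (b ⊗ a)) ≫ (λ_ (dual (b ⊗ a))).hom⟩
    (fun f => (f ⊗ₘ 𝟙 (b ⊗ a)) ≫ (j (b ⊗ a)).inv = pairing a b)

end SymmetricPicard

namespace CategoryTheory

theorem BraidedCategory.nested_contraction_eq_braiding_tensorμ {C : Type*} [Category C]
    [MonoidalCategory C] [BraidedCategory C] {X X' Y Y' : C}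
    (u : X' ⊗ X ⟶ 𝟙_ C) (v : Y' ⊗ Y ⟶ 𝟙_ C) :
    (α_ X' Y' (Y ⊗ X)).hom ≫ X' ◁ (α_ Y' Y X).inv ≫ X' ◁ (v ▷ X) ≫ X' ◁ (λ_ X).hom ≫ u =
      (X' ⊗ Y') ◁ (β_ Y X).hom ≫ tensorμ X' Y' X Y ≫ (u ⊗ₘ v) ≫ (λ_ (𝟙_ C)).hom := by
  have hv : v ▷ X ≫ (λ_ X).hom = (β_ (Y' ⊗ Y) X).hom ≫ X ◁ v ≫ (ρ_ X).hom := by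
    rw [← braiding_naturality_left_assoc, braiding_rightUnitor]
  have hu : (u ⊗ₘ v) ≫ (λ_ (𝟙_ C)).hom = (X' ⊗ X) ◁ v ≫ (ρ_ _).hom ≫ u := by
    rw [tensorHom_def', assoc, unitors_equal, rightUnitor_naturality]
  rw [← whiskerLeft_comp_assoc X' (v ▷ X), hv, hu, braiding_tensor_left_hom]
  simp only [tensorμ]
  monoidal

theorem SymmetricCategory.tensorμ_comp_braiding {C : Type*} [Category C] [MonoidalCategory C]
    [SymmetricCategory C] (X₁ X₂ Y₁ Y₂ : C) :
    tensorμ X₁ X₂ Y₁ Y₂ ≫ (β_ (X₁ ⊗ Y₁) (X₂ ⊗ Y₂)).hom =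
      ((β_ X₁ X₂).hom ⊗ₘ (β_ Y₁ Y₂).hom) ≫ tensorμ X₂ X₁ Y₂ Y₁ := by
  simp [tensorμ, braiding_swap_eq_inv_braiding Y₁ X₂, MonoidalCategory.tensorHom_def]

end CategoryTheory

namespace SymmetricPicard

variable {C : Type u} [Groupoid.{v} C] [MonoidalCategory C] [SymmetricCategory C]
  [SymmetricPicard C]

noncomputable def tensorRightEquiv (b : C) : C ≌ C :=
  CategoryTheory.Equivalence.mk (tensorRight b) (tensorRight (dual b))
    ((rightUnitorNatIso C).symm ≪≫ (tensoringRight C).mapIso (j b ≪≫ β_ (dual b) b) ≪≫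
      tensorRightTensor b (dual b))
    ((tensorRightTensor (dual b) b).symm ≪≫ (tensoringRight C).mapIso (j b).symm ≪≫
      rightUnitorNatIso C)

instance (b : C) : (tensorRight b).IsEquivalence :=
  (tensorRightEquiv b).isEquivalence_functor

theorem dualHom_spec {a b : C} (f : a ⟶ b) :
    (j b).hom ≫ (dualHom f ⊗ₘ inv f) = (j a).hom := by
  obtain ⟨g, hg⟩ := (tensorRight b).map_surjective ((j b).inv ≫ (j a).hom ≫ dual a ◁ f)
  refine Classical.epsilon_spec (p := fun g => (j b).hom ≫ (g ⊗ₘ inv f) = (j a).hom) ⟨g, ?_⟩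
  rw [MonoidalCategory.tensorHom_def, show g ▷ b = _ from hg]; simp

theorem dualHom_whiskerRight_comp_inv {a b : C} (f : a ⟶ b) :
    dualHom f ▷ a ≫ (j a).inv = dual b ◁ f ≫ (j b).inv := by
  rw [Iso.comp_inv_eq, ← dualHom_spec f, tensorHom_def']
  simp

theorem kappa_whiskerRight_comp_inv (a b : C) :
    kappa a b ▷ (b ⊗ a) ≫ (j (b ⊗ a)).inv = pairing a b := by
  obtain ⟨g, hg⟩ := (tensorRight (b ⊗ a)).map_surjective (pairing a b ≫ (j (b ⊗ a)).hom)
  rw [← tensorHom_id]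
  refine Classical.epsilon_spec
    (p := fun f => (f ⊗ₘ 𝟙 (b ⊗ a)) ≫ (j (b ⊗ a)).inv = pairing a b) ⟨g, ?_⟩
  rw [tensorHom_id, show g ▷ (b ⊗ a) = _ from hg, assoc, Iso.hom_inv_id, comp_id]

theorem pairing_eq_tensorμ (a b : C) :
    pairing a b = (dual a ⊗ dual b) ◁ (β_ b a).hom ≫ tensorμ (dual a) (dual b) a b ≫
      ((j a).inv ⊗ₘ (j b).inv) ≫ (λ_ (𝟙_ C)).hom := by
  simp only [pairing, id_tensorHom, tensorHom_id]
  exact BraidedCategory.nested_contraction_eq_braiding_tensorμ _ _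

theorem whiskerLeft_braiding_comp_pairing (a b : C) :
    (dual a ⊗ dual b) ◁ (β_ a b).hom ≫ pairing a b =
      (β_ (dual a) (dual b)).hom ▷ (a ⊗ b) ≫ pairing b a := by
  rw [pairing_eq_tensorμ, pairing_eq_tensorμ, ← whiskerLeft_comp_assoc,
    SymmetricCategory.symmetry, whiskerLeft_id, id_comp, ← tensorHom_def_assoc,
    ← reassoc_of% SymmetricCategory.tensorμ_comp_braiding,
    ← BraidedCategory.braiding_naturality_assoc, braiding_leftUnitor, unitors_equal]

/-- In any symmetric Picard category, `κ_{a,b} ≫ (s_{a,b})^• = s_{a^•,b^•} ≫ κ_{b,a}`,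
where `s` is the braiding. -/
theorem statement4 (a b : C) :
    kappa a b ≫ dualHom (β_ a b).hom = (β_ (dual a) (dual b)).hom ≫ kappa b a := by
  apply (tensorRight (a ⊗ b)).map_injective
  rw [← cancel_mono (j (a ⊗ b)).inv]
  calc (kappa a b ≫ dualHom (β_ a b).hom) ▷ (a ⊗ b) ≫ (j (a ⊗ b)).inv
      = kappa a b ▷ (a ⊗ b) ≫ dual (b ⊗ a) ◁ (β_ a b).hom ≫ (j (b ⊗ a)).inv := by
        rw [comp_whiskerRight, assoc, dualHom_whiskerRight_comp_inv]
    _ = (dual a ⊗ dual b) ◁ (β_ a b).hom ≫ pairing a b := by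
        rw [← whisker_exchange_assoc, kappa_whiskerRight_comp_inv]
    _ = (β_ (dual a) (dual b)).hom ▷ (a ⊗ b) ≫ pairing b a :=
        whiskerLeft_braiding_comp_pairing a b
    _ = ((β_ (dual a) (dual b)).hom ≫ kappa b a) ▷ (a ⊗ b) ≫ (j (a ⊗ b)).inv := by
        rw [comp_whiskerRight, assoc, kappa_whiskerRight_comp_inv]

end SymmetricPicard
end

section
/- In any symmetric Picard category 𝒜, for all objects a, b, c the following two composites a^• ⊗ (b^• ⊗ c^•) ⟶ ((a ⊗ b) ⊗ c)^• are equal: (i) (𝟙_{a^•} ⊗ s_{b^•,c^•}) ≫ (𝟙_{a^•} ⊗ κ_{c,b}) ≫ s_{a^•,(b⊗c)^•} ≫ κ_{b⊗c,a} ≫ (α_{a,b,c})^•, and (ii) α_{a^•,b^•,c^•}⁻¹ ≫ (s_{a^•,b^•} ⊗ 𝟙_{c^•}) ≫ (κ_{b,a} ⊗ 𝟙_{c^•}) ≫ s_{(a⊗b)^•,c^•} ≫ κ_{c,a⊗b}, where s is the braiding, α_{a,b,c} : (a ⊗ b) ⊗ c ⟶ a ⊗ (b ⊗ c) is the associator and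 (α_{a,b,c})^• : (a ⊗ (b ⊗ c))^• ⟶ ((a ⊗ b) ⊗ c)^• is its dual morphism. -/
open CategoryTheory Category MonoidalCategory

universe v u

/-!
Tensoring on the right with `y` is an autoequivalence (with quasi-inverse `- ⊗ y^•`), so
morphisms `X ⟶ y^•` correspond to morphisms `X ⊗ y ⟶ 𝟙` via `g ↦ (g ▷ y) ≫ j_y⁻¹`. Under this
correspondence `κ_{a,b}` becomes the pairing and `f^•` becomes precomposition with `f`, so both
composites become a braiding `a^• ⊗ (b^• ⊗ c^•) ⟶ (c^• ⊗ b^•) ⊗ a^•` followed by the nested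
evaluation of `a^•, b^•, c^•` against `a, b, c`. The two braidings agree by the Yang–Baxter
equation and the rest is coherence.
-/

section Braided

variable {D : Type*} [Category D] [MonoidalCategory D] [BraidedCategory D]

lemma whiskerLeft_braiding_comp_braiding_comp_associator (x y z : D) :
    x ◁ (β_ y z).hom ≫ (β_ x (z ⊗ y)).hom ≫ (α_ z y x).hom =
      (α_ x y z).inv ≫ (β_ x y).hom ▷ z ≫ (β_ (y ⊗ x) z).hom := by
  rw [BraidedCategory.braiding_tensor_right_hom, BraidedCategory.braiding_tensor_left_hom]
  simp only [assoc, Iso.inv_hom_id, comp_id]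
  rw [BraidedCategory.yang_baxter]

end Braided

namespace SymmetricPicard

variable {C : Type u} [Groupoid.{v} C] [MonoidalCategory C] [SymmetricCategory C]
  [SymmetricPicard C]

def tensorRightEquivalence (x : C) : C ≌ C :=
  CategoryTheory.Equivalence.mk (tensorRight x) (tensorRight (dual x))
    (NatIso.ofComponents (fun y =>
      (ρ_ y).symm ≪≫ whiskerLeftIso y (j x ≪≫ β_ (dual x) x) ≪≫ (α_ y x (dual x)).symm)
      (fun f => by
        simp only [Functor.id_obj, Functor.comp_obj, Functor.flip_obj_obj, curriedTensor_obj_obj,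
          Functor.id_map, Iso.trans_hom, Iso.symm_hom, whiskerLeftIso_hom, Functor.comp_map,
          Functor.flip_obj_map, curriedTensor_map_app, assoc]
        rw [rightUnitor_inv_naturality_assoc, ← whisker_exchange_assoc,
          associator_inv_naturality_left]))
    (NatIso.ofComponents (fun y => α_ y (dual x) x ≪≫ whiskerLeftIso y (j x).symm ≪≫ ρ_ y)
      (fun f => by
        simp only [Functor.comp_obj, Functor.flip_obj_obj, curriedTensor_obj_obj, Functor.id_obj,
          Functor.comp_map, Functor.flip_obj_map, curriedTensor_map_app, Iso.trans_hom,
          whiskerLeftIso_hom, Iso.symm_hom, assoc, Functor.id_map]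
        rw [associator_naturality_left_assoc, ← whisker_exchange_assoc, rightUnitor_naturality]))

def homDualEquiv (X y : C) : (X ⟶ dual y) ≃ (X ⊗ y ⟶ 𝟙_ C) :=
  (tensorRightEquivalence y).fullyFaithfulFunctor.homEquiv.trans
    ((Iso.refl (X ⊗ y)).homCongr (j y).symm)

@[simp]
lemma homDualEquiv_apply {X y : C} (g : X ⟶ dual y) :
    homDualEquiv X y g = g ▷ y ≫ (j y).inv := by
  change 𝟙 _ ≫ g ▷ y ≫ (j y).inv = _
  exact id_comp _

lemma homDualEquiv_comp {X Y w : C} (f : X ⟶ Y) (g : Y ⟶ dual w) :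
    homDualEquiv X w (f ≫ g) = f ▷ w ≫ homDualEquiv Y w g := by
  simp

lemma dualHom_spec_iff {a b : C} (f : a ⟶ b) (g : dual b ⟶ dual a) :
    (j b).hom ≫ (g ⊗ₘ inv f) = (j a).hom ↔ homDualEquiv _ _ g = dual b ◁ f ≫ (j b).inv := by
  rw [tensorHom_def', homDualEquiv_apply, Iso.comp_inv_eq, ← Iso.eq_inv_comp, ← inv_whiskerLeft,
    IsIso.inv_comp_eq, assoc]

lemma homDualEquiv_dualHom {a b : C} (f : a ⟶ b) :
    homDualEquiv _ _ (dualHom f) = dual b ◁ f ≫ (j b).inv :=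
  (dualHom_spec_iff f _).1 <| Classical.epsilon_spec (p := fun g => (j b).hom ≫ (g ⊗ₘ inv f) = _)
    ⟨_, (dualHom_spec_iff f _).2 ((homDualEquiv _ _).apply_symm_apply _)⟩

lemma homDualEquiv_comp_dualHom {X a b : C} (g : X ⟶ dual b) (f : a ⟶ b) :
    homDualEquiv X a (g ≫ dualHom f) = X ◁ f ≫ homDualEquiv X b g := by
  rw [homDualEquiv_comp, homDualEquiv_dualHom, homDualEquiv_apply, whisker_exchange_assoc]

lemma homDualEquiv_kappa (a b : C) : homDualEquiv _ _ (kappa a b) = pairing a b := by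
  have spec_iff (g : dual a ⊗ dual b ⟶ dual (b ⊗ a)) :
      (g ⊗ₘ 𝟙 (b ⊗ a)) ≫ (j (b ⊗ a)).inv = pairing a b ↔ homDualEquiv _ _ g = pairing a b := by
    rw [tensorHom_id, homDualEquiv_apply]
  exact (spec_iff _).1 <| Classical.epsilon_spec (p := fun g => (g ⊗ₘ 𝟙 (b ⊗ a)) ≫ _ = _)
    ⟨_, (spec_iff _).2 ((homDualEquiv _ _).apply_symm_apply _)⟩

lemma pairing_eq (a b : C) : pairing a b =
    (α_ (dual a) (dual b) (b ⊗ a)).hom ≫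
      dual a ◁ ((α_ (dual b) b a).inv ≫ (j b).inv ▷ a ≫ (λ_ a).hom) ≫ (j a).inv := by
  simp [pairing]

lemma whiskerLeft_whiskerRight_comp_pairing {X : C} (z : C) {w : C} (f : X ⟶ dual w) :
    (dual z ◁ f) ▷ (w ⊗ z) ≫ pairing z w =
      (α_ (dual z) X (w ⊗ z)).hom ≫
        dual z ◁ ((α_ X w z).inv ≫ homDualEquiv X w f ▷ z ≫ (λ_ z).hom) ≫ (j z).inv := by
  simp only [pairing_eq, homDualEquiv_apply, associator_naturality_middle_assoc,
    ← whiskerLeft_comp_assoc, associator_inv_naturality_left_assoc, comp_whiskerRight, assoc]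

lemma whiskerRight_whiskerRight_comp_pairing {X : C} (z : C) {w : C} (f : X ⟶ dual w) :
    (f ▷ dual z) ▷ (z ⊗ w) ≫ pairing w z =
      (α_ X (dual z) (z ⊗ w)).hom ≫
        X ◁ ((α_ (dual z) z w).inv ≫ (j z).inv ▷ w ≫ (λ_ w).hom) ≫ homDualEquiv X w f := by
  simp only [pairing_eq, homDualEquiv_apply, associator_naturality_left_assoc,
    whisker_exchange_assoc]

/-- In any symmetric Picard category, the two canonical composites
`a^• ⊗ (b^• ⊗ c^•) ⟶ ((a ⊗ b) ⊗ c)^•` built from the braiding `s`, the canonical arrows `κ`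
and the (dual of the) associator, are equal. -/
theorem statement5 (a b c : C) :
    (𝟙 (dual a) ⊗ₘ (β_ (dual b) (dual c)).hom) ≫ (𝟙 (dual a) ⊗ₘ kappa c b) ≫
        (β_ (dual a) (dual (b ⊗ c))).hom ≫ kappa (b ⊗ c) a ≫ dualHom (α_ a b c).hom =
      (α_ (dual a) (dual b) (dual c)).inv ≫ ((β_ (dual a) (dual b)).hom ⊗ₘ 𝟙 (dual c)) ≫
        (kappa b a ⊗ₘ 𝟙 (dual c)) ≫ (β_ (dual (a ⊗ b)) (dual c)).hom ≫ kappa c (a ⊗ b) := by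
  apply (homDualEquiv _ ((a ⊗ b) ⊗ c)).injective
  simp only [← assoc]
  rw [homDualEquiv_comp_dualHom, homDualEquiv_comp, homDualEquiv_comp, homDualEquiv_kappa,
    homDualEquiv_kappa]
  simp only [id_tensorHom, tensorHom_id, assoc, BraidedCategory.braiding_naturality_right,
    BraidedCategory.braiding_naturality_left]
  rw [← reassoc_of% whiskerLeft_braiding_comp_braiding_comp_associator]
  simp only [comp_whiskerRight, assoc]
  rw [whiskerRight_whiskerRight_comp_pairing, whiskerLeft_whiskerRight_comp_pairing,
    homDualEquiv_kappa, homDualEquiv_kappa, pairing_eq, pairing_eq]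
  monoidal

end SymmetricPicard
end

section
/- Let 𝒜 be a symmetric Picard category. The family j is a monoidal natural transformation: besides the naturality j_a ≫ (((f⁻¹))^• ⊗ f) = j_b for every f : a ⟶ b, for all objects a, b one has (j_a ⊗ j_b) ≫ m_{a^•,a,b^•,b} ≫ ((s_{a^•,b^•} ≫ κ_{b,a}) ⊗ 𝟙_{a⊗b}) = λ_𝟙 ≫ j_{a⊗b} as morphisms 𝟙 ⊗ 𝟙 ⟶ (a ⊗ b)^• ⊗ (a ⊗ b), where m_{x,y,z,w} : (x ⊗ y) ⊗ (z ⊗ w) ⟶ (x ⊗ z) ⊗ (y ⊗ w) is the canonical middle-four interchange isomorphism built from associators and the braiding y ⊗ z ⟶ z ⊗ y, s is the braiding and λ_𝟙 the left unitor at the unit object. -/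
/-! Tensoring with an object `b` that admits an isomorphism `𝟙 ≅ b^• ⊗ b` is an equivalence
(in a braided category), so the equations defining `f^•` and `κ` have solutions and the chosen
morphisms satisfy them. Naturality of `j` is the defining equation of `(f⁻¹)^•`. For
monoidality, the defining equation of `κ_{b,a}` turns the claim into a coherence computation in
which `j_a` and `j_b` cancel against their inverses. -/

open CategoryTheory Category MonoidalCategory

universe v u

namespace SymmetricPicard

variable {C : Type u} [Groupoid.{v} C] [MonoidalCategory C] [SymmetricCategory C]
  [SymmetricPicard C]

/-- The canonical middle-four interchange isomorphism
`(x ⊗ y) ⊗ (z ⊗ w) ⟶ (x ⊗ z) ⊗ (y ⊗ w)`, built from associators and the braiding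
`y ⊗ z ⟶ z ⊗ y`. -/
def middleFour (x y z w : C) : (x ⊗ y) ⊗ (z ⊗ w) ⟶ (x ⊗ z) ⊗ (y ⊗ w) :=
  (α_ x y (z ⊗ w)).hom ≫ (x ◁ (α_ y z w).inv) ≫ (x ◁ ((β_ y z).hom ▷ w)) ≫
    (x ◁ (α_ z y w).hom) ≫ (α_ x z (y ⊗ w)).inv

end SymmetricPicard

section InvertibleObject

variable {C : Type u} [Category.{v} C] [MonoidalCategory C] [BraidedCategory C]

def tensorRightEquivOfIso {b d : C} (e : 𝟙_ C ≅ d ⊗ b) : C ≌ C :=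
  CategoryTheory.Equivalence.mk (tensorRight b) (tensorRight d)
    (NatIso.ofComponents
      (fun X => (ρ_ X).symm ≪≫ whiskerLeftIso X (e ≪≫ β_ d b) ≪≫ (α_ X b d).symm)
      (fun f => by
        dsimp
        simp only [whiskerLeftIso_hom, assoc]
        rw [rightUnitor_inv_naturality_assoc, ← whisker_exchange_assoc,
          associator_inv_naturality_left]))
    (NatIso.ofComponents
      (fun X => α_ X d b ≪≫ whiskerLeftIso X e.symm ≪≫ ρ_ X)
      (fun f => by
        dsimp
        simp only [whiskerLeftIso_hom, assoc]
        rw [associator_naturality_left_assoc, ← whisker_exchange_assoc,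
          rightUnitor_naturality]))

theorem exists_whiskerRight_eq_of_iso {b d : C} (e : 𝟙_ C ≅ d ⊗ b) {p q : C}
    (k : p ⊗ b ⟶ q ⊗ b) : ∃ g : p ⟶ q, g ▷ b = k :=
  have : (tensorRight b).Full := (tensorRightEquivOfIso e).full_functor
  ⟨(tensorRight b).preimage k, (tensorRight b).map_preimage k⟩

end InvertibleObject

namespace SymmetricPicard

variable {C : Type u} [Groupoid.{v} C] [MonoidalCategory C] [SymmetricCategory C]
  [SymmetricPicard C]

theorem exists_dualHom_spec {a b : C} (f : a ⟶ b) :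
    ∃ g : dual b ⟶ dual a, (j b).hom ≫ (g ⊗ₘ inv f) = (j a).hom := by
  obtain ⟨g, hg⟩ :=
    exists_whiskerRight_eq_of_iso (j b) ((j b).inv ≫ (j a).hom ≫ (dual a ◁ f))
  refine ⟨g, ?_⟩
  rw [MonoidalCategory.tensorHom_def, hg]
  simp [← whiskerLeft_comp]

theorem j_hom_comp_dualHom_inv_tensorHom {a b : C} (f : a ⟶ b) :
    (j a).hom ≫ (dualHom (inv f) ⊗ₘ f) = (j b).hom := by
  simpa using dualHom_spec (inv f)

theorem exists_kappa_spec (a b : C) :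
    ∃ f : dual a ⊗ dual b ⟶ dual (b ⊗ a),
      (f ⊗ₘ 𝟙 (b ⊗ a)) ≫ (j (b ⊗ a)).inv = pairing a b := by
  obtain ⟨g, hg⟩ := exists_whiskerRight_eq_of_iso (j (b ⊗ a)) (pairing a b ≫ (j (b ⊗ a)).hom)
  exact ⟨g, by simp [hg]⟩

theorem kappa_whiskerRight (a b : C) :
    kappa a b ▷ (b ⊗ a) = pairing a b ≫ (j (b ⊗ a)).hom := by
  rw [← Classical.epsilon_spec (exists_kappa_spec a b)]
  simp [kappa]

/-- By naturality of the braiding, `j_a` turns `β_{a^• ⊗ a, b^•}` into `β_{𝟙, b^•}`, which is a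
unitor. -/
theorem j_tensorHom_j_comp_pairing (a b : C) :
    ((j a).hom ⊗ₘ (j b).hom) ≫ middleFour (dual a) a (dual b) b ≫
      ((β_ (dual a) (dual b)).hom ⊗ₘ 𝟙 (a ⊗ b)) ≫ pairing b a = (λ_ (𝟙_ C)).hom := by
  set X := dual a
  set Y := dual b
  calc ((j a).hom ⊗ₘ (j b).hom) ≫ middleFour X a Y b ≫
      ((β_ X Y).hom ⊗ₘ 𝟙 (a ⊗ b)) ≫ pairing b a
      = (λ_ (𝟙_ C)).hom ≫ (j b).hom ≫ (λ_ (Y ⊗ b)).inv ≫ (α_ (𝟙_ C) Y b).inv ≫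
          (((j a).hom ▷ Y) ▷ b) ≫ ((β_ (X ⊗ a) Y).hom ▷ b) ≫ (α_ Y (X ⊗ a) b).hom ≫
          (Y ◁ ((j a).inv ▷ b)) ≫ (Y ◁ (λ_ b).hom) ≫ (j b).inv := by
        rw [tensorHom_def', BraidedCategory.braiding_tensor_left_hom]
        simp only [middleFour, pairing, id_tensorHom, tensorHom_id]
        monoidal
    _ = (λ_ (𝟙_ C)).hom ≫ (j b).hom ≫ (λ_ (Y ⊗ b)).inv ≫ (α_ (𝟙_ C) Y b).inv ≫
          ((β_ (𝟙_ C) Y).hom ▷ b) ≫ ((Y ◁ (j a).hom) ▷ b) ≫ (α_ Y (X ⊗ a) b).hom ≫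
          (Y ◁ ((j a).inv ▷ b)) ≫ (Y ◁ (λ_ b).hom) ≫ (j b).inv := by
        rw [← comp_whiskerRight_assoc, BraidedCategory.braiding_naturality_left,
          comp_whiskerRight_assoc]
    _ = (λ_ (𝟙_ C)).hom := by
        rw [braiding_tensorUnit_left]
        simp

/-- The family `j` is a monoidal natural transformation: it is natural,
`j_a ≫ ((f⁻¹)^• ⊗ f) = j_b` for every `f : a ⟶ b`, and it is compatible with the tensor
product: `(j_a ⊗ j_b) ≫ m_{a^•,a,b^•,b} ≫ ((s_{a^•,b^•} ≫ κ_{b,a}) ⊗ 𝟙_{a⊗b}) =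
λ_𝟙 ≫ j_{a⊗b}`. -/
theorem statement7 :
    (∀ {a b : C} (f : a ⟶ b), (j a).hom ≫ (dualHom (inv f) ⊗ₘ f) = (j b).hom) ∧
    (∀ a b : C,
        ((j a).hom ⊗ₘ (j b).hom) ≫ middleFour (dual a) a (dual b) b ≫
            (((β_ (dual a) (dual b)).hom ≫ kappa b a) ⊗ₘ 𝟙 (a ⊗ b)) =
          (λ_ (𝟙_ C)).hom ≫ (j (a ⊗ b)).hom) := by
  refine ⟨j_hom_comp_dualHom_inv_tensorHom, fun a b => ?_⟩
  rw [tensorHom_id, comp_whiskerRight, kappa_whiskerRight, ← tensorHom_id,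
    reassoc_of% j_tensorHom_j_comp_pairing a b]

end SymmetricPicard
end

section
/- Let 𝒜, ℬ be symmetric Picard categories, F : 𝒜 ⥤ ℬ a functor, and F²_{x,y} : Fx ⊗ Fy ⟶ F(x ⊗ y) a family of morphisms natural in x and y and satisfying the associativity coherence: for all objects a, b, c, (F²_{a,b} ⊗ 𝟙_{Fc}) ≫ F²_{a⊗b,c} ≫ F(α_{a,b,c}) = α_{Fa,Fb,Fc} ≫ (𝟙_{Fa} ⊗ F²_{b,c}) ≫ F²_{a,b⊗c}, with α the associator. Then there exists a unique morphism ε : 𝟙 ⟶ F𝟙 such that (F, ε, F²) is a lax monoidal functor, i.e. such that the two unit coherence axioms hold. -/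
/-!
In a Picard category every object `x` is invertible, so `- ⊗ x` is an autoequivalence. Put
`U = F𝟙` and `m = F²_{𝟙,𝟙} ≫ F(λ_𝟙) : U ⊗ U ⟶ U`. The left unit axiom at `𝟙` says
`(ε ▷ U) ≫ m = λ_U`; as `m` is invertible and `- ▷ U` is fully faithful, this determines `ε`.
Associativity of `F²`, combined with naturality and the triangle identity, says that `m` is
associative and that `F²_{𝟙,a} ≫ F(λ_a)` and `F²_{a,𝟙} ≫ F(ρ_a)` are associative left and right
actions of `U` on `Fa`. A left unit of an invertible associative multiplication is a two-sided
unit, and a two-sided unit acts trivially through every invertible action: these are the two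
unit axioms.
-/

open CategoryTheory Category MonoidalCategory

universe v u

namespace SymmetricPicard

universe v₁ u₁ v₂ u₂

section Monoidal

variable {C : Type*} [Category C] [MonoidalCategory C]

def tensorRightEquivOfIso {x d : C} (e : x ⊗ d ≅ 𝟙_ C) (e' : d ⊗ x ≅ 𝟙_ C) : C ≌ C :=
  CategoryTheory.Equivalence.mk (tensorRight x) (tensorRight d)
    ((rightUnitorNatIso C).symm ≪≫ (tensoringRight C).mapIso e.symm ≪≫ tensorRightTensor x d)
    ((tensorRightTensor d x).symm ≪≫ (tensoringRight C).mapIso e' ≪≫ rightUnitorNatIso C)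

theorem whiskerLeft_comp_eq_rightUnitor_of_whiskerRight_comp_eq_leftUnitor {U : C}
    [(tensorRight U).Faithful] {ε : 𝟙_ C ⟶ U} {m : U ⊗ U ⟶ U}
    (hε : ε ▷ U ≫ m = (λ_ U).hom) (hm : m ▷ U = (α_ U U U).hom ≫ U ◁ m) :
    U ◁ ε ≫ m = (ρ_ U).hom := by
  apply (tensorRight U).map_injective
  change (U ◁ ε ≫ m) ▷ U = (ρ_ U).hom ▷ U
  rw [comp_whiskerRight, hm, associator_naturality_middle_assoc, ← whiskerLeft_comp, hε,
    triangle]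

theorem whiskerRight_comp_action_eq_leftUnitor {U X : C} {ε : 𝟙_ C ⟶ U} {m : U ⊗ U ⟶ U}
    (hε : ε ▷ U ≫ m = (λ_ U).hom) (φ : U ⊗ X ⟶ X) [IsIso φ]
    (hφ : m ▷ X = (α_ U U X).hom ≫ U ◁ φ) : ε ▷ X ≫ φ = (λ_ X).hom := by
  rw [← cancel_epi (𝟙_ C ◁ φ), leftUnitor_naturality, leftUnitor_tensor_hom, ← hε,
    comp_whiskerRight, hφ]
  simp only [assoc]
  rw [associator_naturality_left_assoc, Iso.inv_hom_id_assoc, whisker_exchange_assoc]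

theorem whiskerLeft_comp_action_eq_rightUnitor {U X : C} {ε : 𝟙_ C ⟶ U} {m : U ⊗ U ⟶ U}
    (hε : U ◁ ε ≫ m = (ρ_ U).hom) (ψ : X ⊗ U ⟶ X) [IsIso ψ]
    (hψ : ψ ▷ U = (α_ X U U).hom ≫ X ◁ m) : X ◁ ε ≫ ψ = (ρ_ X).hom := by
  rw [← cancel_epi (ψ ▷ 𝟙_ C), rightUnitor_naturality, rightUnitor_tensor_hom, ← hε,
    ← whisker_exchange_assoc, hψ]
  simp only [assoc, associator_naturality_right_assoc, whiskerLeft_comp]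

end Monoidal

instance isEquivalence_tensorRight {C : Type u} [Groupoid.{v} C] [MonoidalCategory C]
    [SymmetricCategory C] [SymmetricPicard C] (x : C) : (tensorRight x).IsEquivalence :=
  (tensorRightEquivOfIso (β_ x (dual x) ≪≫ (j x).symm) (j x).symm).isEquivalence_functor

section Tensorator

variable {A : Type*} [Category A] [MonoidalCategory A] {B : Type*} [Category B]
  [MonoidalCategory B] (F : A ⥤ B) (F2 : ∀ x y : A, F.obj x ⊗ F.obj y ⟶ F.obj (x ⊗ y))

def leftAction (a : A) : F.obj (𝟙_ A) ⊗ F.obj a ⟶ F.obj a :=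
  F2 (𝟙_ A) a ≫ F.map (λ_ a).hom

def rightAction (a : A) : F.obj a ⊗ F.obj (𝟙_ A) ⟶ F.obj a :=
  F2 a (𝟙_ A) ≫ F.map (ρ_ a).hom

variable {F F2}

theorem leftAction_assoc
    (hnat : ∀ {x x' y y' : A} (f : x ⟶ x') (g : y ⟶ y'),
      (F.map f ⊗ₘ F.map g) ≫ F2 x' y' = F2 x y ≫ F.map (f ⊗ₘ g))
    (hassoc : ∀ a b c : A,
      (F2 a b ⊗ₘ 𝟙 (F.obj c)) ≫ F2 (a ⊗ b) c ≫ F.map (α_ a b c).hom =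
        (α_ (F.obj a) (F.obj b) (F.obj c)).hom ≫ (𝟙 (F.obj a) ⊗ₘ F2 b c) ≫ F2 a (b ⊗ c))
    (a : A) :
    leftAction F F2 (𝟙_ A) ▷ F.obj a ≫ leftAction F F2 a =
      ((α_ _ _ _).hom ≫ F.obj (𝟙_ A) ◁ leftAction F F2 a) ≫ leftAction F F2 a := by
  have hnat_left := hnat (λ_ (𝟙_ A)).hom (𝟙 a)
  have hnat_right := hnat (𝟙 (𝟙_ A)) (λ_ a).hom
  have hassoc' := hassoc (𝟙_ A) (𝟙_ A) a
  simp only [F.map_id, tensorHom_id, id_tensorHom] at hnat_left hnat_right hassoc'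
  simp only [leftAction, comp_whiskerRight, whiskerLeft_comp, assoc]
  rw [reassoc_of% hnat_left, unitors_equal, ← triangle, F.map_comp_assoc, reassoc_of% hassoc',
    reassoc_of% hnat_right]

theorem rightAction_assoc
    (hnat : ∀ {x x' y y' : A} (f : x ⟶ x') (g : y ⟶ y'),
      (F.map f ⊗ₘ F.map g) ≫ F2 x' y' = F2 x y ≫ F.map (f ⊗ₘ g))
    (hassoc : ∀ a b c : A,
      (F2 a b ⊗ₘ 𝟙 (F.obj c)) ≫ F2 (a ⊗ b) c ≫ F.map (α_ a b c).hom =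
        (α_ (F.obj a) (F.obj b) (F.obj c)).hom ≫ (𝟙 (F.obj a) ⊗ₘ F2 b c) ≫ F2 a (b ⊗ c))
    (a : A) :
    rightAction F F2 a ▷ F.obj (𝟙_ A) ≫ rightAction F F2 a =
      ((α_ _ _ _).hom ≫ F.obj a ◁ leftAction F F2 (𝟙_ A)) ≫ rightAction F F2 a := by
  have hnat_left := hnat (ρ_ a).hom (𝟙 (𝟙_ A))
  have hnat_right := hnat (𝟙 a) (λ_ (𝟙_ A)).hom
  have hassoc' := hassoc a (𝟙_ A) (𝟙_ A)
  simp only [F.map_id, tensorHom_id, id_tensorHom] at hnat_left hnat_right hassoc'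
  simp only [leftAction, rightAction, comp_whiskerRight, whiskerLeft_comp, assoc]
  rw [reassoc_of% hnat_left, ← triangle, F.map_comp_assoc, reassoc_of% hassoc',
    reassoc_of% hnat_right]

end Tensorator

theorem statement12_general {A : Type u₁} [Groupoid.{v₁} A] [MonoidalCategory A]
    {B : Type u₂} [Groupoid.{v₂} B] [MonoidalCategory B]
    [SymmetricCategory B] [SymmetricPicard B]
    (F : A ⥤ B) (F2 : ∀ x y : A, F.obj x ⊗ F.obj y ⟶ F.obj (x ⊗ y))
    (hnat : ∀ {x x' y y' : A} (f : x ⟶ x') (g : y ⟶ y'),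
        (F.map f ⊗ₘ F.map g) ≫ F2 x' y' = F2 x y ≫ F.map (f ⊗ₘ g))
    (hassoc : ∀ a b c : A,
        (F2 a b ⊗ₘ 𝟙 (F.obj c)) ≫ F2 (a ⊗ b) c ≫ F.map (α_ a b c).hom =
          (α_ (F.obj a) (F.obj b) (F.obj c)).hom ≫ (𝟙 (F.obj a) ⊗ₘ F2 b c) ≫
            F2 a (b ⊗ c)) :
    ∃! ε : 𝟙_ B ⟶ F.obj (𝟙_ A),
      (∀ a : A, (λ_ (F.obj a)).hom =
          (ε ⊗ₘ 𝟙 (F.obj a)) ≫ F2 (𝟙_ A) a ≫ F.map (λ_ a).hom) ∧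
      (∀ a : A, (ρ_ (F.obj a)).hom =
          (𝟙 (F.obj a) ⊗ₘ ε) ≫ F2 a (𝟙_ A) ≫ F.map (ρ_ a).hom) := by
  set U := F.obj (𝟙_ A)
  set m := leftAction F F2 (𝟙_ A)
  have left_assoc a := (cancel_mono _).1 (leftAction_assoc hnat hassoc a)
  have right_assoc a := (cancel_mono _).1 (rightAction_assoc hnat hassoc a)
  obtain ⟨ε, hε⟩ := (tensorRight U).map_surjective ((λ_ U).hom ≫ inv m)
  have left_unit : ε ▷ U ≫ m = (λ_ U).hom := (IsIso.eq_comp_inv m).1 hε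
  have right_unit := whiskerLeft_comp_eq_rightUnitor_of_whiskerRight_comp_eq_leftUnitor
    left_unit (left_assoc (𝟙_ A))
  refine ⟨ε, ⟨fun a => ?_, fun a => ?_⟩, fun ε' hε' => ?_⟩
  · simpa [leftAction] using
      (whiskerRight_comp_action_eq_leftUnitor left_unit _ (left_assoc a)).symm
  · simpa [rightAction] using
      (whiskerLeft_comp_action_eq_rightUnitor right_unit _ (right_assoc a)).symm
  · apply (tensorRight U).map_injective
    rw [← cancel_mono m]
    change ε' ▷ U ≫ m = ε ▷ U ≫ m
    rw [left_unit]
    simpa [m, leftAction] using (hε'.1 (𝟙_ A)).symm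

/-- Given a functor `F` between symmetric Picard categories and a natural family
`F² x y : Fx ⊗ Fy ⟶ F(x ⊗ y)` satisfying the associativity coherence, there is a unique
morphism `ε : 𝟙 ⟶ F𝟙` such that `(F, ε, F²)` is a lax monoidal functor, i.e. such that the
two unit coherence axioms hold. -/
theorem statement12 {A : Type u₁} [Groupoid.{v₁} A] [MonoidalCategory A]
    [SymmetricCategory A] [SymmetricPicard A]
    {B : Type u₂} [Groupoid.{v₂} B] [MonoidalCategory B]
    [SymmetricCategory B] [SymmetricPicard B]
    (F : A ⥤ B) (F2 : ∀ x y : A, F.obj x ⊗ F.obj y ⟶ F.obj (x ⊗ y))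
    (hnat : ∀ {x x' y y' : A} (f : x ⟶ x') (g : y ⟶ y'),
        (F.map f ⊗ₘ F.map g) ≫ F2 x' y' = F2 x y ≫ F.map (f ⊗ₘ g))
    (hassoc : ∀ a b c : A,
        (F2 a b ⊗ₘ 𝟙 (F.obj c)) ≫ F2 (a ⊗ b) c ≫ F.map (α_ a b c).hom =
          (α_ (F.obj a) (F.obj b) (F.obj c)).hom ≫ (𝟙 (F.obj a) ⊗ₘ F2 b c) ≫
            F2 a (b ⊗ c)) :
    ∃! ε : 𝟙_ B ⟶ F.obj (𝟙_ A),
      (∀ a : A, (λ_ (F.obj a)).hom =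
          (ε ⊗ₘ 𝟙 (F.obj a)) ≫ F2 (𝟙_ A) a ≫ F.map (λ_ a).hom) ∧
      (∀ a : A, (ρ_ (F.obj a)).hom =
          (𝟙 (F.obj a) ⊗ₘ ε) ≫ F2 a (𝟙_ A) ≫ F.map (ρ_ a).hom) :=
  statement12_general F F2 hnat hassoc

end SymmetricPicard
end

section
/- Let F, G : 𝒜 ⥤ ℬ be lax monoidal functors between symmetric Picard categories, with unit morphisms ε_F : 𝟙 ⟶ F𝟙, ε_G : 𝟙 ⟶ G𝟙 and structure morphisms F², G². If σ : F ⟶ G is a natural transformation satisfying the tensor compatibility (σ_a ⊗ σ_b) ≫ G²_{a,b} = F²_{a,b} ≫ σ_{a⊗b} for all objects a, b, then σ automatically satisfies the unit compatibility ε_F ≫ σ_𝟙 = ε_G; that is, σ is a monoidal natural transformation. -/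
/-!
The right unit axiom of `G` expresses `ρ_{G a}` through `G a ◁ ε G`; transporting the same axiom
for `F` along `σ`, with the tensor compatibility at `(a, 𝟙)`, expresses it equally through
`G a ◁ (ε F ≫ σ_𝟙)`. In a groupoid the remaining arrows cancel, so the two units agree after
whiskering by `G 𝟙`, and whiskering by an object with a tensor inverse is faithful.
-/

open CategoryTheory Category MonoidalCategory Functor.LaxMonoidal

universe v u

namespace SymmetricPicard

universe v₁ u₁ v₂ u₂

theorem whiskerLeft_injective_of_iso_tensor {C : Type u} [Category.{v} C] [MonoidalCategory C]
    {X Y : C} (e : 𝟙_ C ≅ Y ⊗ X) {a b : C} {f g : a ⟶ b} (h : X ◁ f = X ◁ g) : f = g := by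
  have conj : ∀ u : a ⟶ b, 𝟙_ C ◁ u = e.hom ▷ a ≫ (Y ⊗ X) ◁ u ≫ e.inv ▷ b := fun u => by
    rw [← whisker_exchange_assoc]
    simp
  rw [← whiskerLeft_iff, conj f, conj g, tensor_whiskerLeft, tensor_whiskerLeft, h]

theorem rightUnitor_hom_comp_app {A : Type u₁} [Category.{v₁} A] [MonoidalCategory A]
    {B : Type u₂} [Category.{v₂} B] [MonoidalCategory B]
    {F G : A ⥤ B} [F.LaxMonoidal] [G.LaxMonoidal] (σ : F ⟶ G) (a : A)
    (h : (σ.app a ⊗ₘ σ.app (𝟙_ A)) ≫ μ G a (𝟙_ A) = μ F a (𝟙_ A) ≫ σ.app (a ⊗ 𝟙_ A)) :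
    (ρ_ (F.obj a)).hom ≫ σ.app a =
      σ.app a ▷ 𝟙_ B ≫ G.obj a ◁ (ε F ≫ σ.app (𝟙_ A)) ≫ μ G a (𝟙_ A) ≫ G.map (ρ_ a).hom := by
  calc (ρ_ (F.obj a)).hom ≫ σ.app a
      = F.obj a ◁ ε F ≫ μ F a (𝟙_ A) ≫ σ.app (a ⊗ 𝟙_ A) ≫ G.map (ρ_ a).hom := by
        rw [right_unitality_assoc, σ.naturality]
    _ = F.obj a ◁ ε F ≫ (σ.app a ⊗ₘ σ.app (𝟙_ A)) ≫ μ G a (𝟙_ A) ≫ G.map (ρ_ a).hom := by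
        rw [reassoc_of% h]
    _ = _ := by
        rw [tensorHom_def', MonoidalCategory.whiskerLeft_comp]
        simp [whisker_exchange_assoc]

theorem whiskerLeft_ε_comp_app {A : Type u₁} [Category.{v₁} A] [MonoidalCategory A]
    {B : Type u₂} [Groupoid.{v₂} B] [MonoidalCategory B]
    {F G : A ⥤ B} [F.LaxMonoidal] [G.LaxMonoidal] (σ : F ⟶ G) (a : A)
    (h : (σ.app a ⊗ₘ σ.app (𝟙_ A)) ≫ μ G a (𝟙_ A) = μ F a (𝟙_ A) ≫ σ.app (a ⊗ 𝟙_ A)) :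
    G.obj a ◁ (ε F ≫ σ.app (𝟙_ A)) = G.obj a ◁ ε G := by
  have transported := rightUnitor_hom_comp_app σ a h
  rw [← rightUnitor_naturality, right_unitality] at transported
  exact (cancel_mono (μ G a (𝟙_ A) ≫ G.map (ρ_ a).hom)).mp
    ((cancel_epi (σ.app a ▷ 𝟙_ B)).mp transported.symm)

theorem statement13_general {A : Type u₁} [Groupoid.{v₁} A] [MonoidalCategory A]
    {B : Type u₂} [Groupoid.{v₂} B] [MonoidalCategory B]
    [SymmetricCategory B] [SymmetricPicard B]
    (F G : A ⥤ B) [F.LaxMonoidal] [G.LaxMonoidal] (σ : F ⟶ G)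
    (hσ_tensor : ∀ a b : A,
        (σ.app a ⊗ₘ σ.app b) ≫ μ G a b = μ F a b ≫ σ.app (a ⊗ b)) :
    ε F ≫ σ.app (𝟙_ A) = ε G :=
  whiskerLeft_injective_of_iso_tensor (j (G.obj (𝟙_ A)))
    (whiskerLeft_ε_comp_app σ (𝟙_ A) (hσ_tensor _ _))

/-- Let `F, G` be lax monoidal functors between symmetric Picard categories, with unit
morphisms `ε F`, `ε G` and tensorators `μ F`, `μ G`.  A natural transformation `σ : F ⟶ G`
satisfying the tensor compatibility `(σ_a ⊗ σ_b) ≫ μ G a b = μ F a b ≫ σ_{a⊗b}`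
automatically satisfies the unit compatibility `ε F ≫ σ_𝟙 = ε G`, i.e. it is a monoidal
natural transformation. -/
theorem statement13 {A : Type u₁} [Groupoid.{v₁} A] [MonoidalCategory A]
    [SymmetricCategory A] [SymmetricPicard A]
    {B : Type u₂} [Groupoid.{v₂} B] [MonoidalCategory B]
    [SymmetricCategory B] [SymmetricPicard B]
    (F G : A ⥤ B) [F.LaxMonoidal] [G.LaxMonoidal] (σ : F ⟶ G)
    (hσ_tensor : ∀ a b : A,
        (σ.app a ⊗ₘ σ.app b) ≫ μ G a b = μ F a b ≫ σ.app (a ⊗ b)) :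
    ε F ≫ σ.app (𝟙_ A) = ε G :=
  statement13_general F G σ hσ_tensor

end SymmetricPicard
end
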